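/- arXiv:1002.2586 — 7 statements merged into one kernel-verified Lean document; each statement's English description precedes it below -/
import Mathlib

section
/- Let n < m and let P be a fixed m×m real orthogonal matrix. If A is a random n×m real matrix whose entries are independent standard Gaussian random variables (i.e., A is distributed according to the product of standard Gaussian measures on the space of n×m real matrices), then with probability 1 the spark of AP equals n+1. -/
/-!
For a fixed set `s` of `n` columns, the determinant of the corresponding `n × n` minor of `A P`
is a polynomial in the entries of `A`. It is not the zero polynomial: taking for `A` the rows `s`
of `Pᵀ` makes the minor the identity. The zero set of a nonzero polynomial is null for any
product of atomless σ-finite measures on `ℝ` (induct on the number of variables and use Fubini: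
a nonzero polynomial in one variable has finitely many roots). Hence almost surely every `n`
columns of `A P` are independent, while any `n + 1` columns in `ℝⁿ` are dependent.
-/

open MeasureTheory ProbabilityTheory Matrix

open Classical in
/-- The spark of a matrix: the smallest number of columns that form a linearly
dependent set; with the convention that it is the number of columns plus one if
all sets of columns are linearly independent. -/
noncomputable def Matrix.spark {α β : Type*} [Fintype α] [Fintype β] (D : Matrix α β ℝ) : ℕ :=
  if ∃ s : Finset β, ¬ LinearIndependent ℝ (fun j : s => fun i => D i j.val) then
    sInf {k | ∃ s : Finset β, s.card = k ∧ ¬ LinearIndependent ℝ (fun j : s => fun i => D i j.val)}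
  else Fintype.card β + 1

theorem Polynomial.ae_eval_ne_zero {μ : Measure ℝ} [NullSingletonClass μ] {q : Polynomial ℝ}
    (hq : q ≠ 0) : ∀ᵐ y ∂μ, q.eval y ≠ 0 := by
  simpa [ae_iff] using (Polynomial.finite_setOfPred_isRoot hq).measure_zero μ

namespace MvPolynomial

variable {μ : Measure ℝ} [NullSingletonClass μ] [SigmaFinite μ]

theorem ae_eval_ne_zero_fin : ∀ {N : ℕ} {p : MvPolynomial (Fin N) ℝ}, p ≠ 0 →
    ∀ᵐ x ∂Measure.pi (fun _ => μ), eval x p ≠ 0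
  | 0, p, hp => by
    obtain ⟨c, rfl⟩ := C_surjective (Fin 0) p
    exact .of_forall fun _ => by simpa using hp
  | N + 1, p, hp => by
    set q := finSuccEquiv ℝ N p
    have hq : q ≠ 0 := by simpa [q] using hp
    have hfiber : ∀ᵐ s ∂Measure.pi (fun _ : Fin N => μ), ∀ᵐ y ∂μ,
        eval (Fin.cons y s : Fin (N + 1) → ℝ) p ≠ 0 := by
      filter_upwards [ae_eval_ne_zero_fin (Polynomial.leadingCoeff_ne_zero.2 hq)] with s hs
      simp_rw [eval_eq_eval_mv_eval']
      refine Polynomial.ae_eval_ne_zero fun h => hs ?_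
      have := congrArg (Polynomial.coeff · q.natDegree) h
      simp only [Polynomial.coeff_map, Polynomial.coeff_zero] at this
      exact this
    have hmeas : MeasurableSet {x : Fin (N + 1) → ℝ | eval x p ≠ 0} :=
      (measurableSet_singleton 0).compl.preimage (continuous_eval p).measurable
    rw [← (measurePreserving_piFinSuccAbove (fun _ => μ) 0).symm.map_eq,
      MeasurableEquiv.measurableEmbedding _ |>.ae_map_iff, ← Measure.prod_swap,
      ae_map_iff measurable_swap.aemeasurable, Measure.ae_prod_iff_ae_ae]
    · simpa [Fin.consEquiv] using hfiber
    · exact hmeas.preimage ((MeasurableEquiv.measurable _).comp measurable_swap)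
    · exact hmeas.preimage (MeasurableEquiv.measurable _)

theorem ae_eval_ne_zero {ι : Type*} [Fintype ι] {p : MvPolynomial ι ℝ} (hp : p ≠ 0) :
    ∀ᵐ x ∂Measure.pi (fun _ : ι => μ), eval x p ≠ 0 := by
  let e := Fintype.equivFin ι
  have hq : rename e p ≠ 0 := by
    simpa using (rename_injective _ e.injective).ne hp
  rw [← (measurePreserving_arrowCongr' (fun _ => μ) (fun _ => μ) e.symm
    (MeasurableEquiv.refl ℝ) fun _ => .id μ).map_eq,
    MeasurableEquiv.measurableEmbedding _ |>.ae_map_iff]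
  filter_upwards [ae_eval_ne_zero_fin hq] with x hx
  rw [eval_rename] at hx
  exact hx

end MvPolynomial

namespace Matrix

variable {α β γ : Type*} [DecidableEq α] [Fintype β]

theorem transpose_submatrix_mul_submatrix_eq_one {R : Type*} [Semiring R] [DecidableEq γ]
    {P : Matrix β γ R} (hP : Pᵀ * P = 1) {e : α → γ} (he : Function.Injective e) :
    (Pᵀ.submatrix e id * P).submatrix id e = 1 := by
  rw [← submatrix_one e he, ← hP, submatrix_mul _ _ e id e Function.bijective_id]
  rfl

theorem ae_det_mul_submatrix_ne_zero [Fintype α] {μ : Measure ℝ} [NullSingletonClass μ]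
    [SigmaFinite μ] (P : Matrix β γ ℝ) (e : α → γ) {A₀ : Matrix α β ℝ}
    (hA₀ : ((A₀ * P).submatrix id e).det ≠ 0) :
    ∀ᵐ ω ∂Measure.pi (fun _ : α × β => μ),
      (((of fun i j => ω (i, j)) * P).submatrix id e).det ≠ 0 := by
  let p : MvPolynomial (α × β) ℝ :=
    (of fun i j => ∑ k, MvPolynomial.X (i, k) * MvPolynomial.C (P k (e j))).det
  have heval : ∀ ω, MvPolynomial.eval ω p =
      (((of fun i j => ω (i, j)) * P).submatrix id e).det := by
    intro ω
    rw [RingHom.map_det]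
    congr 1
    ext i j
    simp [mul_apply]
  have hp : p ≠ 0 := by
    intro h
    have := heval fun ij => A₀ ij.1 ij.2
    rw [h, map_zero] at this
    exact hA₀ this.symm
  filter_upwards [MvPolynomial.ae_eval_ne_zero hp] with ω hω
  rwa [heval] at hω

end Matrix

theorem Matrix.spark_eq_card_add_one {α β : Type*} [Fintype α] [Fintype β] (D : Matrix α β ℝ)
    (hcard : Fintype.card α < Fintype.card β)
    (hD : ∀ s : Finset β, s.card = Fintype.card α →
      LinearIndependent ℝ (fun j : s => fun i => D i j.val)) :
    D.spark = Fintype.card α + 1 := by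
  have hsmall : ∀ s : Finset β, s.card ≤ Fintype.card α →
      LinearIndependent ℝ (fun j : s => fun i => D i j.val) := by
    intro s hs
    obtain ⟨t, hst, -, ht⟩ := Finset.exists_subsuperset_card_eq s.subset_univ hs
      (by simpa using hcard.le)
    exact (hD t ht).comp (Set.inclusion (Finset.coe_subset.2 hst)) (Set.inclusion_injective _)
  have hlarge : ∀ s : Finset β, s.card = Fintype.card α + 1 →
      ¬ LinearIndependent ℝ (fun j : s => fun i => D i j.val) := by
    intro s hs h
    have := h.fintype_card_le_finrank
    simp [hs] at this
  obtain ⟨t, -, ht⟩ := Finset.exists_subset_card_eq (s := Finset.univ)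
    (n := Fintype.card α + 1) (by simpa using hcard)
  rw [spark, if_pos ⟨t, hlarge t ht⟩]
  refine le_antisymm (Nat.sInf_le ⟨t, ht, hlarge t ht⟩) (le_csInf ⟨_, t, ht, hlarge t ht⟩ ?_)
  rintro _ ⟨s, rfl, hs⟩
  by_contra! hlt
  exact hs (hsmall s (by omega))

/-- If `A` is a random `n × m` matrix (`n < m`) with i.i.d. standard Gaussian entries
and `P` is a fixed `m × m` orthogonal matrix, then with probability 1 the spark of
`A * P` equals `n + 1`. -/
theorem spark_AP_eq_ae {n m : ℕ} (hnm : n < m)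
    (P : Matrix (Fin m) (Fin m) ℝ) (hP : Pᵀ * P = 1) :
    ∀ᵐ (ω : Fin n × Fin m → ℝ) ∂(Measure.pi fun _ : Fin n × Fin m => gaussianReal 0 1),
      ((Matrix.of fun i j => ω (i, j)) * P).spark = n + 1 := by
  have := nullSingletonClass_gaussianReal (μ := 0) one_ne_zero
  have hcols : ∀ s : Finset (Fin m), s.card = n →
      ∀ᵐ (ω : Fin n × Fin m → ℝ) ∂(Measure.pi fun _ : Fin n × Fin m => gaussianReal 0 1),
        LinearIndependent ℝ (fun j : s => fun i => ((of fun i j => ω (i, j)) * P) i j.val) := by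
    intro s hs
    let e : Fin n ≃ s := (s.equivFinOfCardEq hs).symm
    have he : Function.Injective (Subtype.val ∘ e) := Subtype.val_injective.comp e.injective
    have hA₀ := transpose_submatrix_mul_submatrix_eq_one hP he
    filter_upwards [ae_det_mul_submatrix_ne_zero P (Subtype.val ∘ e)
      (A₀ := Pᵀ.submatrix (Subtype.val ∘ e) id) (by simp [hA₀])] with ω hω
    exact (linearIndependent_equiv e).1 (linearIndependent_cols_of_det_ne_zero hω)
  filter_upwards [ae_all_iff.2 fun s => Filter.eventually_imp_distrib_left.2 (hcols s)] with ω hω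
  simpa using spark_eq_card_add_one ((of fun i j => ω (i, j)) * P) (by simpa using hnm)
    (by simpa using hω)
end

section
/- Let Ψ be a finite set of invertible m×m real matrices and let A ∈ ℝ^{n×m} satisfy: (i) σ(AP) ≥ 2k for every P ∈ Ψ, and (ii) A is k-rank preserving of Ψ. Suppose x = P s and x̄ = P̄ s̄ where P, P̄ ∈ Ψ, s and s̄ are vectors in ℝ^m with at most k nonzero entries each, and A x = A x̄. Then x = x̄. (That is, the solution to the blind compressed sensing problem with a finite set of bases is unique.) -/
open Matrix

/-- The number of nonzero entries of a vector. -/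
noncomputable def sparsity {m : Type*} [Fintype m] (s : m → ℝ) : ℕ :=
  (Finset.univ.filter fun i => s i ≠ 0).card

/-- The `m × (k + k)` matrix `[P_T, P̄_J]` formed by horizontally concatenating the
columns of `P` indexed by `T` and the columns of `P'` indexed by `J`. -/
def pairSubmatrix {m : ℕ} (P P' : Matrix (Fin m) (Fin m) ℝ) (T J : Finset (Fin m)) :
    Matrix (Fin m) (↥T ⊕ ↥J) ℝ :=
  Matrix.of fun i => Sum.elim (fun a => P i a.val) (fun a => P' i a.val)

/-- `A` is `k`-rank preserving of the set of bases `Ψ` if for every two index sets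
`T, J` of size `k` and every two matrices `P, P̄ ∈ Ψ`,
`rank (A * [P_T, P̄_J]) = rank [P_T, P̄_J]`. -/
def IsRankPreserving {n m : ℕ} (k : ℕ) (A : Matrix (Fin n) (Fin m) ℝ)
    (Ψ : Set (Matrix (Fin m) (Fin m) ℝ)) : Prop :=
  ∀ P ∈ Ψ, ∀ P' ∈ Ψ, ∀ T J : Finset (Fin m), T.card = k → J.card = k →
    (A * pairSubmatrix P P' T J).rank = (pairSubmatrix P P' T J).rank

/-! Extend the supports of `s` and `s̄` to `k`-sets `T` and `J`. Then `x - x̄ = [P_T, P̄_J] v` for the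
stacked coefficient vector `v = (s_T, -s̄_J)`, and `A (x - x̄) = 0`. Rank preservation says that `A`
kills no nonzero vector of the column space of `[P_T, P̄_J]`, so `x - x̄ = 0`. The spark bound
`2k ≤ σ(AP) ≤ m + 1` guarantees `k ≤ m`, so that such `T` and `J` exist. -/

lemma Matrix.spark_le_card_add_one {α β : Type*} [Fintype α] [Fintype β] (D : Matrix α β ℝ) :
    D.spark ≤ Fintype.card β + 1 := by
  classical
  unfold Matrix.spark
  split_ifs with h
  · obtain ⟨t, ht⟩ := h
    exact le_trans (Nat.sInf_le ⟨t, rfl, ht⟩) (by have := t.card_le_univ; omega)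
  · exact le_rfl

lemma exists_card_eq_of_sparsity_le {ι : Type*} [Fintype ι] {s : ι → ℝ} {k : ℕ}
    (hs : sparsity s ≤ k) (hk : k ≤ Fintype.card ι) :
    ∃ T : Finset ι, T.card = k ∧ ∀ i, s i ≠ 0 → i ∈ T := by
  classical
  obtain ⟨T, hsT, hT⟩ := Finset.exists_superset_card_eq hs hk
  exact ⟨T, hT, fun i hi => hsT (Finset.mem_filter.2 ⟨Finset.mem_univ i, hi⟩)⟩

/-- Equal ranks force equal kernels, since `ker M ≤ ker (A * M)` always. -/
lemma Matrix.mulVec_eq_zero_of_rank_mul_eq {K l m o : Type*} [Field K]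
    [Fintype m] [Fintype o] (A : Matrix l m K) (M : Matrix m o K)
    (hrank : (A * M).rank = M.rank) {v : o → K} (hv : (A * M) *ᵥ v = 0) : M *ᵥ v = 0 := by
  have hle : LinearMap.ker M.mulVecLin ≤ LinearMap.ker (A * M).mulVecLin := fun w hw => by
    simp_all [← mulVec_mulVec]
  have hker : LinearMap.ker (A * M).mulVecLin = LinearMap.ker M.mulVecLin := by
    refine (Submodule.eq_of_le_of_finrank_le hle ?_).symm
    have h1 := LinearMap.finrank_range_add_finrank_ker M.mulVecLin
    have h2 := LinearMap.finrank_range_add_finrank_ker (A * M).mulVecLin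
    rw [Matrix.rank, Matrix.rank] at hrank
    omega
  have : v ∈ LinearMap.ker (A * M).mulVecLin := hv
  rwa [hker] at this

lemma sum_coe_sort_eq_sum_of_support_subset {ι M : Type*} [Fintype ι] [AddCommMonoid M]
    {T : Finset ι} {f : ι → M} (hf : ∀ i, f i ≠ 0 → i ∈ T) : ∑ a : T, f a = ∑ i, f i := by
  rw [Finset.sum_coe_sort]
  exact Finset.sum_subset T.subset_univ fun i _ hi => by_contra fun h => hi (hf i h)

lemma pairSubmatrix_mulVec_sumElim {m : ℕ} (P P' : Matrix (Fin m) (Fin m) ℝ)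
    {T J : Finset (Fin m)} {s s' : Fin m → ℝ}
    (hs : ∀ i, s i ≠ 0 → i ∈ T) (hs' : ∀ i, s' i ≠ 0 → i ∈ J) :
    pairSubmatrix P P' T J *ᵥ Sum.elim (fun a => s a) (fun a => s' a) = P *ᵥ s + P' *ᵥ s' := by
  ext i
  simp only [mulVec, dotProduct, pairSubmatrix, of_apply, Fintype.sum_sum_type, Sum.elim_inl,
    Sum.elim_inr, Pi.add_apply]
  rw [sum_coe_sort_eq_sum_of_support_subset (f := fun j => P i j * s j),
    sum_coe_sort_eq_sum_of_support_subset (f := fun j => P' i j * s' j)]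
  · exact fun j h => hs' j (right_ne_zero_of_mul h)
  · exact fun j h => hs j (right_ne_zero_of_mul h)

theorem finite_set_BCS_uniqueness_general {n m k : ℕ}
    (Ψ : Set (Matrix (Fin m) (Fin m) ℝ))
    (A : Matrix (Fin n) (Fin m) ℝ)
    (hspark : ∀ P ∈ Ψ, 2 * k ≤ (A * P).spark)
    (hrank : IsRankPreserving k A Ψ)
    (P Pbar : Matrix (Fin m) (Fin m) ℝ) (hP : P ∈ Ψ) (hPbar : Pbar ∈ Ψ)
    (s sbar : Fin m → ℝ) (hs : sparsity s ≤ k) (hsbar : sparsity sbar ≤ k)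
    (x xbar : Fin m → ℝ) (hx : x = P.mulVec s) (hxbar : xbar = Pbar.mulVec sbar)
    (hmeas : A.mulVec x = A.mulVec xbar) :
    x = xbar := by
  have hkm : k ≤ Fintype.card (Fin m) := by
    have := (hspark P hP).trans (A * P).spark_le_card_add_one
    simp only [Fintype.card_fin] at this ⊢
    omega
  obtain ⟨T, hT, hsT⟩ := exists_card_eq_of_sparsity_le hs hkm
  obtain ⟨J, hJ, hsJ⟩ := exists_card_eq_of_sparsity_le hsbar hkm
  have hsJ' : ∀ i, (-sbar) i ≠ 0 → i ∈ J := fun i h => hsJ i (neg_ne_zero.1 h)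
  set M := pairSubmatrix P Pbar T J
  set v := Sum.elim (fun a : T => s a) (fun a : J => (-sbar) a)
  have hMv : M *ᵥ v = x - xbar := by
    rw [pairSubmatrix_mulVec_sumElim P Pbar hsT hsJ', mulVec_neg, hx, hxbar, sub_eq_add_neg]
  have hAMv : (A * M) *ᵥ v = 0 := by
    rw [← mulVec_mulVec, hMv, mulVec_sub, hmeas, sub_self]
  have hrankM : (A * M).rank = M.rank := hrank P hP Pbar hPbar T J hT hJ
  exact sub_eq_zero.1 (hMv ▸ mulVec_eq_zero_of_rank_mul_eq A M hrankM hAMv)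

/-- Uniqueness for blind compressed sensing with a finite set of bases: if
`σ(AP) ≥ 2k` for every `P ∈ Ψ` and `A` is `k`-rank preserving of `Ψ`, then two
signals that are `k`-sparse under bases from `Ψ` and have equal measurements must
be equal. -/
theorem finite_set_BCS_uniqueness {n m k : ℕ}
    (Ψ : Set (Matrix (Fin m) (Fin m) ℝ)) (hΨfin : Ψ.Finite)
    (hΨinv : ∀ P ∈ Ψ, IsUnit P)
    (A : Matrix (Fin n) (Fin m) ℝ)
    (hspark : ∀ P ∈ Ψ, 2 * k ≤ (A * P).spark)
    (hrank : IsRankPreserving k A Ψ)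
    (P Pbar : Matrix (Fin m) (Fin m) ℝ) (hP : P ∈ Ψ) (hPbar : Pbar ∈ Ψ)
    (s sbar : Fin m → ℝ) (hs : sparsity s ≤ k) (hsbar : sparsity sbar ≤ k)
    (x xbar : Fin m → ℝ) (hx : x = P.mulVec s) (hxbar : xbar = Pbar.mulVec sbar)
    (hmeas : A.mulVec x = A.mulVec xbar) :
    x = xbar :=
  finite_set_BCS_uniqueness_general Ψ A hspark hrank P Pbar hP hPbar s sbar hs hsbar x xbar hx hxbar
    hmeas
end

section
/- Let n be even and let A ∈ ℝ^{n×nL} be a union of L orthogonal bases which is not inter-block diagonal. Let P ∈ ℝ^{nL×nL} be orthogonal 2L-block diagonal with σ(AP) = n+1, and let Q be an nL×nL signed permutation matrix. If P̃ is any nL×nL matrix of the form P̃ = P′Q′, where P′ is orthogonal 2L-block diagonal and Q′ is a signed permutation matrix, and A P̃ = A P Q, then P̃ = P Q. (Uniqueness of the solution to the structurally constrained blind compressed sensing problem.) -/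
open Matrix

/-- The `n × nL` matrix `A = [A₁, …, A_L]` obtained by horizontally concatenating
the `n × n` blocks `Ab l` (here `n = 2r` and the columns of each block are indexed
by `Fin 2 × Fin r`). -/
def unionOfBases {r L : ℕ} (Ab : Fin L → Matrix (Fin (2 * r)) (Fin 2 × Fin r) ℝ) :
    Matrix (Fin (2 * r)) (Fin L × Fin 2 × Fin r) ℝ :=
  Matrix.of fun i p => Ab p.1 i p.2

/-- The `nL × nL` block diagonal matrix (with `n = 2r`, hence `2L` diagonal blocks of
size `r × r`) built from the blocks `Pb`. -/
def blockDiagonal2L {r L : ℕ} (Pb : Fin L × Fin 2 → Matrix (Fin r) (Fin r) ℝ) :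
    Matrix (Fin L × Fin 2 × Fin r) (Fin L × Fin 2 × Fin r) ℝ :=
  Matrix.of fun p q =>
    if (p.1, p.2.1) = (q.1, q.2.1) then Pb (p.1, p.2.1) p.2.2 q.2.2 else 0

/-- A signed permutation matrix: exactly one nonzero entry, equal to `±1`, in each
row and each column. -/
def IsSignedPermMatrix {ι : Type*} [Fintype ι] (Q : Matrix ι ι ℝ) : Prop :=
  (∀ i j, Q i j = 0 ∨ Q i j = 1 ∨ Q i j = -1) ∧
  (∀ i, ∃! j, Q i j ≠ 0) ∧ (∀ j, ∃! i, Q i j ≠ 0)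

/-- The `(c, d)` sub-block of size `r × r` of a `2r × 2r` matrix indexed by
`Fin 2 × Fin r`. -/
def subBlock {r : ℕ} (M : Matrix (Fin 2 × Fin r) (Fin 2 × Fin r) ℝ) (c d : Fin 2) :
    Matrix (Fin r) (Fin r) ℝ :=
  M.submatrix (fun a => (c, a)) (fun b => (d, b))

/-- A union of `L` orthogonal bases `A = [A₁, …, A_L]` is inter-block diagonal if
there are indices `i ≠ j` such that, writing `Aᵢᵀ Aⱼ = [[R₁, R₂], [R₃, R₄]]` with
blocks of size `(n/2) × (n/2)`, one has `rank R₁ = rank R₄` and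
`rank R₂ = rank R₃ = n/2 − rank R₁`. -/
def IsInterBlockDiagonal {r L : ℕ}
    (Ab : Fin L → Matrix (Fin (2 * r)) (Fin 2 × Fin r) ℝ) : Prop :=
  ∃ i j : Fin L, i ≠ j ∧
    (subBlock ((Ab i)ᵀ * Ab j) 0 0).rank = (subBlock ((Ab i)ᵀ * Ab j) 1 1).rank ∧
    (subBlock ((Ab i)ᵀ * Ab j) 0 1).rank = r - (subBlock ((Ab i)ᵀ * Ab j) 0 0).rank ∧
    (subBlock ((Ab i)ᵀ * Ab j) 1 0).rank = r - (subBlock ((Ab i)ᵀ * Ab j) 0 0).rank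


/-!
Reading `A P̃ = A P Q` column by column, after cancelling the signed permutations, every
column of `A P′` is a nonzero multiple of a single column of `A P`. Since the diagonal blocks of
`P` are orthogonal, the `r` columns of `A P` in a block span the same space as the corresponding
columns of `A`, so that column of `A P` lies in the span of the block of the `A P′`-column;
as `σ(A P) = 2r + 1 > r + 1` it must belong to that block. Inside a block the columns of `A` are
orthonormal, hence the corresponding columns of `P′` and `P` agree up to the same scalar, and
`P′ Q′ = P Q` follows.
-/

lemma Matrix.col_mul {α ι κ R : Type*} [Fintype ι] [NonUnitalNonAssocSemiring R]
    (M : Matrix α ι R) (N : Matrix ι κ R) (j : κ) : (M * N).col j = M *ᵥ N.col j :=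
  rfl

lemma IsSignedPermMatrix.exists_col_eq_single {ι : Type*} [Fintype ι] [DecidableEq ι]
    {Q : Matrix ι ι ℝ} (hQ : IsSignedPermMatrix Q) :
    ∃ (e : ι → ι) (ε : ι → ℝ), (∀ j, ε j ≠ 0) ∧ ∀ j, Q.col j = Pi.single (e j) (ε j) := by
  choose e he hunique using hQ.2.2
  refine ⟨e, fun j => Q (e j) j, he, fun j => funext fun i => ?_⟩
  by_cases hi : i = e j
  · simp [hi]
  · simpa [hi] using not_imp_comm.mp (hunique j i) hi

lemma col_mul_eq_smul_of_col_eq_single {α ι : Type*} [Fintype ι] [DecidableEq ι]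
    (M : Matrix α ι ℝ) {Q : Matrix ι ι ℝ} {e : ι → ι} {ε : ι → ℝ}
    (hQ : ∀ j, Q.col j = Pi.single (e j) (ε j)) (j : ι) :
    (M * Q).col j = ε j • M.col (e j) := by
  rw [col_mul, hQ, mulVec_single, op_smul_eq_smul]

lemma Matrix.linearIndepOn_col_of_card_lt_spark {α β : Type*} [Fintype α] [Fintype β]
    (D : Matrix α β ℝ) {s : Finset β} (hs : s.card < D.spark) :
    LinearIndepOn ℝ D.col (s : Set β) := by
  by_contra hdep
  have hex : ∃ t : Finset β, ¬ LinearIndependent ℝ (fun j : t => fun i => D i j.val) := ⟨s, hdep⟩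
  have hle : D.spark ≤ s.card := by
    rw [Matrix.spark, if_pos hex]
    exact Nat.sInf_le ⟨s, rfl, hdep⟩
  omega

section BlockColumns

variable {α : Type*} {r L : ℕ}

def blockCols (X : Matrix α (Fin L × Fin 2 × Fin r) ℝ) (b : Fin L × Fin 2) :
    Matrix α (Fin r) ℝ :=
  X.submatrix id fun a => (b.1, b.2, a)

lemma blockCols_mul_blockDiagonal2L [Fintype α] (X : Matrix α (Fin L × Fin 2 × Fin r) ℝ)
    (Pb : Fin L × Fin 2 → Matrix (Fin r) (Fin r) ℝ) (b : Fin L × Fin 2) :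
    blockCols (X * blockDiagonal2L Pb) b = blockCols X b * Pb b := by
  ext i a
  simp only [blockCols, submatrix_apply, id, mul_apply, Fintype.sum_prod_type, blockDiagonal2L,
    of_apply, Prod.mk.injEq, ite_and, mul_ite, mul_zero, Finset.sum_ite_irrel,
    Finset.sum_const_zero, Finset.sum_ite_eq', Finset.mem_univ, if_true]

lemma col_mul_blockDiagonal2L [Fintype α] (X : Matrix α (Fin L × Fin 2 × Fin r) ℝ)
    (Pb : Fin L × Fin 2 → Matrix (Fin r) (Fin r) ℝ) (q : Fin L × Fin 2 × Fin r) :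
    (X * blockDiagonal2L Pb).col q = blockCols X (q.1, q.2.1) *ᵥ (Pb (q.1, q.2.1)).col q.2.2 := by
  rw [← col_mul, ← blockCols_mul_blockDiagonal2L]
  rfl

lemma col_blockDiagonal2L_eq_smul {Pb P'b : Fin L × Fin 2 → Matrix (Fin r) (Fin r) ℝ}
    {k m : Fin L × Fin 2 × Fin r} {s : ℝ} (hmk : (m.1, m.2.1) = (k.1, k.2.1))
    (h : (P'b (k.1, k.2.1)).col k.2.2 = s • (Pb (k.1, k.2.1)).col m.2.2) :
    (blockDiagonal2L P'b).col k = s • (blockDiagonal2L Pb).col m := by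
  funext p
  simp only [col_apply, blockDiagonal2L, of_apply, Pi.smul_apply, smul_eq_mul, hmk]
  split_ifs with hp
  · rw [hp]
    exact congrFun h p.2.2
  · rw [mul_zero]

lemma transpose_mul_self_blockCols_unionOfBases
    {Ab : Fin L → Matrix (Fin (2 * r)) (Fin 2 × Fin r) ℝ} {l : Fin L}
    (hA : (Ab l)ᵀ * Ab l = 1) (c : Fin 2) :
    (blockCols (unionOfBases Ab) (l, c))ᵀ * blockCols (unionOfBases Ab) (l, c) = 1 := by
  ext a a'
  simpa [blockCols, unionOfBases, mul_apply, one_apply] using congrFun (congrFun hA (c, a)) (c, a')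

lemma block_eq_of_col_mem_span_blockCols [Fintype α] {D : Matrix α (Fin L × Fin 2 × Fin r) ℝ}
    (hD : 2 * r < D.spark) {m : Fin L × Fin 2 × Fin r} {b : Fin L × Fin 2}
    (hm : D.col m ∈ Submodule.span ℝ (Set.range (blockCols D b).col)) : (m.1, m.2.1) = b := by
  by_contra hne
  set T := Finset.univ.image fun a : Fin r => (b.1, b.2, a)
  have hmT : m ∉ T := by
    simp only [T, Finset.mem_image, Finset.mem_univ, true_and, not_exists]
    rintro a rfl
    exact hne rfl
  have hcard : (insert m T).card < D.spark := by
    have : T.card = r := by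
      rw [Finset.card_image_of_injective _ fun a a' h => by simpa using h, Finset.card_univ,
        Fintype.card_fin]
    have hr : 0 < r := m.2.2.pos
    rw [Finset.card_insert_of_notMem hmT]
    omega
  have hli := D.linearIndepOn_col_of_card_lt_spark hcard
  rw [Finset.coe_insert, linearIndepOn_insert (by exact_mod_cast hmT)] at hli
  have hrange : D.col '' T = Set.range (blockCols D b).col := by
    simp only [T, Finset.coe_image, Finset.coe_univ, Set.image_univ, ← Set.range_comp]
    rfl
  exact hli.2 (hrange ▸ hm)

lemma col_blockDiagonal2L_eq_smul_of_col_mul_eq [Fintype α]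
    {A : Matrix α (Fin L × Fin 2 × Fin r) ℝ}
    (hA : ∀ b, (blockCols A b)ᵀ * blockCols A b = 1)
    {Pb P'b : Fin L × Fin 2 → Matrix (Fin r) (Fin r) ℝ} (hP : ∀ b, (Pb b)ᵀ * Pb b = 1)
    (hspark : 2 * r < (A * blockDiagonal2L Pb).spark) {k m : Fin L × Fin 2 × Fin r} {s : ℝ}
    (hs : s ≠ 0) (h : (A * blockDiagonal2L P'b).col k = s • (A * blockDiagonal2L Pb).col m) :
    (blockDiagonal2L P'b).col k = s • (blockDiagonal2L Pb).col m := by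
  obtain ⟨l, c, a⟩ := k
  have hk : (A * blockDiagonal2L P'b).col (l, c, a) = blockCols A (l, c) *ᵥ (P'b (l, c)).col a :=
    col_mul_blockDiagonal2L A P'b (l, c, a)
  have hspan : (A * blockDiagonal2L Pb).col m ∈
      Submodule.span ℝ (Set.range (blockCols (A * blockDiagonal2L Pb) (l, c)).col) := by
    rw [← range_mulVecLin, blockCols_mul_blockDiagonal2L]
    refine ⟨s⁻¹ • (Pb (l, c))ᵀ *ᵥ (P'b (l, c)).col a, ?_⟩
    rw [mulVecLin_apply, mulVec_smul, mulVec_mulVec, Matrix.mul_assoc,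
      mul_eq_one_comm.mp (hP (l, c)), Matrix.mul_one, ← hk, h, smul_smul,
      inv_mul_cancel₀ hs, one_smul]
  have hmb := block_eq_of_col_mem_span_blockCols hspark hspan
  refine col_blockDiagonal2L_eq_smul hmb ?_
  have hC : blockCols A (l, c) *ᵥ (P'b (l, c)).col a =
      blockCols A (l, c) *ᵥ (s • (Pb (l, c)).col m.2.2) := by
    rw [mulVec_smul, ← hk, h, col_mul_blockDiagonal2L, hmb]
  simpa [mulVec_mulVec, hA (l, c)] using congrArg ((blockCols A (l, c))ᵀ *ᵥ ·) hC

end BlockColumns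

theorem structural_BCS_uniqueness_general {r L : ℕ}
    (Ab : Fin L → Matrix (Fin (2 * r)) (Fin 2 × Fin r) ℝ)
    (hA : ∀ l, (Ab l)ᵀ * Ab l = 1)
    (Pb : Fin L × Fin 2 → Matrix (Fin r) (Fin r) ℝ)
    (hP : ∀ b, (Pb b)ᵀ * Pb b = 1)
    (hspark : (unionOfBases Ab * blockDiagonal2L Pb).spark = 2 * r + 1)
    (Q : Matrix (Fin L × Fin 2 × Fin r) (Fin L × Fin 2 × Fin r) ℝ)
    (hQ : IsSignedPermMatrix Q)
    (Ptilde : Matrix (Fin L × Fin 2 × Fin r) (Fin L × Fin 2 × Fin r) ℝ)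
    (P'b : Fin L × Fin 2 → Matrix (Fin r) (Fin r) ℝ)
    (Q' : Matrix (Fin L × Fin 2 × Fin r) (Fin L × Fin 2 × Fin r) ℝ)
    (hQ' : IsSignedPermMatrix Q')
    (hPtilde : Ptilde = blockDiagonal2L P'b * Q')
    (heq : unionOfBases Ab * Ptilde = unionOfBases Ab * blockDiagonal2L Pb * Q) :
    Ptilde = blockDiagonal2L Pb * Q := by
  obtain ⟨e, ε, hε, hQcol⟩ := hQ.exists_col_eq_single
  obtain ⟨e', ε', hε', hQ'col⟩ := hQ'.exists_col_eq_single
  subst hPtilde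
  set A := unionOfBases Ab
  set P := blockDiagonal2L Pb
  set P' := blockDiagonal2L P'b
  refine Matrix.ext fun i j => congrFun (?_ : (P' * Q').col j = (P * Q).col j) i
  have hAP : (A * P').col (e' j) = (ε j / ε' j) • (A * P).col (e j) := by
    have hj := congrArg (·.col j) heq
    simp only [← Matrix.mul_assoc, col_mul_eq_smul_of_col_eq_single _ hQcol,
      col_mul_eq_smul_of_col_eq_single _ hQ'col] at hj
    rw [div_eq_inv_mul, ← smul_smul, ← hj, smul_smul, inv_mul_cancel₀ (hε' j), one_smul]
  have hP'P : P'.col (e' j) = (ε j / ε' j) • P.col (e j) :=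
    col_blockDiagonal2L_eq_smul_of_col_mul_eq
      (fun b => transpose_mul_self_blockCols_unionOfBases (hA b.1) b.2) hP
      (hspark ▸ Nat.lt_succ_self _) (div_ne_zero (hε j) (hε' j)) hAP
  rw [col_mul_eq_smul_of_col_eq_single _ hQ'col, col_mul_eq_smul_of_col_eq_single _ hQcol, hP'P,
    smul_smul, mul_div_cancel₀ _ (hε' j)]

/-- Uniqueness of the solution to the structurally constrained BCS problem: if `A`
is a union of `L` orthogonal bases which is not inter-block diagonal, `P` is
orthogonal `2L`-block diagonal with `σ(AP) = n + 1`, `Q` is a signed permutation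
matrix, and `P̃ = P′ Q′` (with `P′` orthogonal `2L`-block diagonal and `Q′` a
signed permutation matrix) satisfies `A P̃ = A P Q`, then `P̃ = P Q`. -/
theorem structural_BCS_uniqueness {r L : ℕ}
    (Ab : Fin L → Matrix (Fin (2 * r)) (Fin 2 × Fin r) ℝ)
    (hA : ∀ l, (Ab l)ᵀ * Ab l = 1)
    (hnibd : ¬ IsInterBlockDiagonal Ab)
    (Pb : Fin L × Fin 2 → Matrix (Fin r) (Fin r) ℝ)
    (hP : ∀ b, (Pb b)ᵀ * Pb b = 1)
    (hspark : (unionOfBases Ab * blockDiagonal2L Pb).spark = 2 * r + 1)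
    (Q : Matrix (Fin L × Fin 2 × Fin r) (Fin L × Fin 2 × Fin r) ℝ)
    (hQ : IsSignedPermMatrix Q)
    (Ptilde : Matrix (Fin L × Fin 2 × Fin r) (Fin L × Fin 2 × Fin r) ℝ)
    (P'b : Fin L × Fin 2 → Matrix (Fin r) (Fin r) ℝ)
    (hP' : ∀ b, (P'b b)ᵀ * P'b b = 1)
    (Q' : Matrix (Fin L × Fin 2 × Fin r) (Fin L × Fin 2 × Fin r) ℝ)
    (hQ' : IsSignedPermMatrix Q')
    (hPtilde : Ptilde = blockDiagonal2L P'b * Q')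
    (heq : unionOfBases Ab * Ptilde = unionOfBases Ab * blockDiagonal2L Pb * Q) :
    Ptilde = blockDiagonal2L Pb * Q :=
  structural_BCS_uniqueness_general Ab hA Pb hP hspark Q hQ Ptilde P'b Q' hQ' hPtilde heq
end

section
/- Let n be even and let A ∈ ℝ^{n×nL} be a union of L orthogonal bases which is not inter-block diagonal. Let P and P̂ both be orthogonal 2L-block diagonal nL×nL matrices with σ(AP) = n+1, and let Q be an nL×nL signed permutation matrix. If A P̂ = A P Q, then P̂ = P Q. -/
open Matrix

/-!
Every column of `P̂ - P Q` is supported on at most two diagonal blocks: that of its own index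
(from `P̂`) and that of the unique row where the column of `Q` is nonzero (from `P Q`). Such a
column `v` lies in the kernel of `A`, so `w = Pᵀ v`, which has the same block support, lies in
the kernel of `A P`. A vector supported on at most `2r` coordinates in the kernel of a matrix of spark
`2r + 1` vanishes, hence `w = 0` and `v = P w = 0`.
-/

namespace Matrix

variable {α β : Type*} [Fintype α] [Fintype β]

theorem linearIndependent_cols_of_card_lt_spark (D : Matrix α β ℝ) {s : Finset β}
    (hs : s.card < D.spark) : LinearIndependent ℝ (fun j : s => fun i => D i j.val) := by
  by_contra h
  rw [spark, if_pos ⟨s, h⟩] at hs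
  exact hs.not_ge (Nat.sInf_le ⟨s, rfl, h⟩)

theorem eq_zero_of_mulVec_eq_zero_of_card_lt_spark (D : Matrix α β ℝ) {s : Finset β}
    (hs : s.card < D.spark) {w : β → ℝ} (hw : ∀ j ∉ s, w j = 0) (hDw : D *ᵥ w = 0) :
    w = 0 := by
  have hsum : ∑ j : s, w j • (fun i => D i j.val) = 0 := by
    funext i
    calc (∑ j : s, w j • fun i => D i j.val) i = ∑ j ∈ s, D i j * w j := by
          rw [Finset.sum_apply, ← Finset.sum_coe_sort s]
          exact Finset.sum_congr rfl fun j _ => mul_comm _ _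
      _ = (D *ᵥ w) i := Finset.sum_subset (Finset.subset_univ s) fun j _ hj => by simp [hw j hj]
      _ = 0 := by rw [hDw, Pi.zero_apply]
  have hzero := Fintype.linearIndependent_iff.mp
    (linearIndependent_cols_of_card_lt_spark D hs) (fun j => w j) hsum
  funext j
  by_cases hj : j ∈ s
  · exact hzero ⟨j, hj⟩
  · exact hw j hj

end Matrix

section BlockDiagonal2L

variable {r L : ℕ}

abbrev blockIndex (p : Fin L × Fin 2 × Fin r) : Fin L × Fin 2 := (p.1, p.2.1)

theorem blockDiagonal2L_apply_of_ne (Pb : Fin L × Fin 2 → Matrix (Fin r) (Fin r) ℝ)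
    {p q : Fin L × Fin 2 × Fin r} (h : blockIndex p ≠ blockIndex q) :
    blockDiagonal2L Pb p q = 0 :=
  if_neg h

theorem blockDiagonal2L_eq_reindex (Pb : Fin L × Fin 2 → Matrix (Fin r) (Fin r) ℝ) :
    blockDiagonal2L Pb =
      reindex ((Equiv.prodComm _ _).trans (Equiv.prodAssoc _ _ _))
        ((Equiv.prodComm _ _).trans (Equiv.prodAssoc _ _ _)) (blockDiagonal Pb) := by
  ext ⟨a, b, c⟩ ⟨d, e, f⟩
  simp [blockDiagonal2L, blockDiagonal_apply]

theorem blockDiagonal2L_mul_transpose_self {Pb : Fin L × Fin 2 → Matrix (Fin r) (Fin r) ℝ}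
    (hP : ∀ b, (Pb b)ᵀ * Pb b = 1) : blockDiagonal2L Pb * (blockDiagonal2L Pb)ᵀ = 1 := by
  refine mul_eq_one_comm.mp ?_
  have hblocks : (fun b => (Pb b)ᵀ * Pb b) = 1 := funext hP
  rw [blockDiagonal2L_eq_reindex, transpose_reindex, reindex_apply, reindex_apply,
    submatrix_mul_equiv, blockDiagonal_transpose, ← blockDiagonal_mul, hblocks,
    blockDiagonal_one, submatrix_one_equiv]

theorem card_filter_blockIndex_mem (B : Finset (Fin L × Fin 2)) :
    (Finset.univ.filter fun p : Fin L × Fin 2 × Fin r => blockIndex p ∈ B).card = B.card * r := by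
  have hmap : (Finset.univ.filter fun p : Fin L × Fin 2 × Fin r => blockIndex p ∈ B) =
      (B ×ˢ Finset.univ).map (Equiv.prodAssoc _ _ (Fin r)).toEmbedding := by
    ext ⟨a, b, c⟩
    simp
  rw [hmap, Finset.card_map, Finset.card_product, Finset.card_univ, Fintype.card_fin]

theorem blockDiagonal2L_mulVec_eq_zero_of_blockIndex_notMem
    (Pb : Fin L × Fin 2 → Matrix (Fin r) (Fin r) ℝ) {B : Set (Fin L × Fin 2)}
    {v : Fin L × Fin 2 × Fin r → ℝ} (hv : ∀ p, blockIndex p ∉ B → v p = 0)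
    {p : Fin L × Fin 2 × Fin r} (hp : blockIndex p ∉ B) : (blockDiagonal2L Pb *ᵥ v) p = 0 := by
  refine Finset.sum_eq_zero fun q _ => ?_
  dsimp only
  by_cases hq : blockIndex q ∈ B
  · rw [blockDiagonal2L_apply_of_ne Pb (p := p) (q := q) fun h => hp (h ▸ hq), zero_mul]
  · rw [hv q hq, mul_zero]

theorem blockDiagonal2L_transpose (Pb : Fin L × Fin 2 → Matrix (Fin r) (Fin r) ℝ) :
    (blockDiagonal2L Pb)ᵀ = blockDiagonal2L fun b => (Pb b)ᵀ := by
  ext p q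
  by_cases h : blockIndex q = blockIndex p
  · simp only [transpose_apply, blockDiagonal2L, of_apply, if_pos h, if_pos h.symm]
    exact congrArg (fun b => Pb b q.2.2 p.2.2) h
  · rw [transpose_apply, blockDiagonal2L_apply_of_ne _ h,
      blockDiagonal2L_apply_of_ne _ (Ne.symm h)]

theorem eq_zero_of_mulVec_eq_zero_of_blockSupport {m : Type*} [Fintype m]
    {D : Matrix m (Fin L × Fin 2 × Fin r) ℝ} {Pb : Fin L × Fin 2 → Matrix (Fin r) (Fin r) ℝ}
    (hP : ∀ b, (Pb b)ᵀ * Pb b = 1) {B : Finset (Fin L × Fin 2)}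
    (hB : B.card * r < (D * blockDiagonal2L Pb).spark)
    {v : Fin L × Fin 2 × Fin r → ℝ} (hv : ∀ p, blockIndex p ∉ B → v p = 0)
    (hDv : D *ᵥ v = 0) : v = 0 := by
  set P := blockDiagonal2L Pb
  have hPPt := blockDiagonal2L_mul_transpose_self hP
  have hw : Pᵀ *ᵥ v = 0 := by
    refine (D * P).eq_zero_of_mulVec_eq_zero_of_card_lt_spark
      (s := Finset.univ.filter fun p => blockIndex p ∈ B)
      ((card_filter_blockIndex_mem B).trans_lt hB) (fun p hp => ?_) ?_
    · rw [blockDiagonal2L_transpose]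
      exact blockDiagonal2L_mulVec_eq_zero_of_blockIndex_notMem _ (B := B) hv (by simpa using hp)
    · rw [mulVec_mulVec, Matrix.mul_assoc, hPPt, Matrix.mul_one, hDv]
  rw [← Matrix.one_mulVec v, ← hPPt, ← mulVec_mulVec, hw, mulVec_zero]

end BlockDiagonal2L

theorem blockDiag_signedPerm_unique_general {r L : ℕ}
    (Ab : Fin L → Matrix (Fin (2 * r)) (Fin 2 × Fin r) ℝ)
    (Pb Phatb : Fin L × Fin 2 → Matrix (Fin r) (Fin r) ℝ)
    (hP : ∀ b, (Pb b)ᵀ * Pb b = 1)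
    (hspark : (unionOfBases Ab * blockDiagonal2L Pb).spark = 2 * r + 1)
    (Q : Matrix (Fin L × Fin 2 × Fin r) (Fin L × Fin 2 × Fin r) ℝ)
    (hQ : IsSignedPermMatrix Q)
    (heq : unionOfBases Ab * blockDiagonal2L Phatb
         = unionOfBases Ab * blockDiagonal2L Pb * Q) :
    blockDiagonal2L Phatb = blockDiagonal2L Pb * Q := by
  set P := blockDiagonal2L Pb
  set Phat := blockDiagonal2L Phatb
  ext p q
  obtain ⟨k, -, hQ_col⟩ := hQ.2.2 q
  suffices hcol : (fun p => (Phat - P * Q) p q) = 0 by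
    simpa [sub_eq_zero] using congrFun hcol p
  refine eq_zero_of_mulVec_eq_zero_of_blockSupport (D := unionOfBases Ab) hP
    (B := {blockIndex q, blockIndex k})
    (by rw [hspark]; exact (Nat.mul_le_mul_right r Finset.card_le_two).trans_lt (by omega))
    (fun p hp => ?_) ?_
  · simp only [Finset.mem_insert, Finset.mem_singleton, not_or] at hp
    have hPhat0 : Phat p q = 0 := blockDiagonal2L_apply_of_ne Phatb hp.1
    have hPQ0 : (P * Q) p q = 0 :=
      blockDiagonal2L_mulVec_eq_zero_of_blockIndex_notMem Pb (B := {blockIndex k})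
        (fun m hm => by_contra fun hQm => hm (hQ_col m hQm ▸ rfl)) hp.2
    rw [Matrix.sub_apply, hPhat0, hPQ0, sub_zero]
  · have hker : unionOfBases Ab * (Phat - P * Q) = 0 := by
      rw [Matrix.mul_sub, ← Matrix.mul_assoc, heq, sub_self]
    funext i
    simpa [mulVec, dotProduct, mul_apply] using congrFun (congrFun hker i) q

/-- Lemma (key step for structural BCS uniqueness): if `A` is a union of `L`
orthogonal bases which is not inter-block diagonal, `P` and `P̂` are orthogonal
`2L`-block diagonal, `σ(AP) = n + 1` and `A P̂ = A P Q` for a signed permutation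
matrix `Q`, then `P̂ = P Q`. -/
theorem blockDiag_signedPerm_unique {r L : ℕ}
    (Ab : Fin L → Matrix (Fin (2 * r)) (Fin 2 × Fin r) ℝ)
    (hA : ∀ l, (Ab l)ᵀ * Ab l = 1)
    (hnibd : ¬ IsInterBlockDiagonal Ab)
    (Pb Phatb : Fin L × Fin 2 → Matrix (Fin r) (Fin r) ℝ)
    (hP : ∀ b, (Pb b)ᵀ * Pb b = 1) (hPhat : ∀ b, (Phatb b)ᵀ * Phatb b = 1)
    (hspark : (unionOfBases Ab * blockDiagonal2L Pb).spark = 2 * r + 1)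
    (Q : Matrix (Fin L × Fin 2 × Fin r) (Fin L × Fin 2 × Fin r) ℝ)
    (hQ : IsSignedPermMatrix Q)
    (heq : unionOfBases Ab * blockDiagonal2L Phatb
         = unionOfBases Ab * blockDiagonal2L Pb * Q) :
    blockDiagonal2L Phatb = blockDiagonal2L Pb * Q :=
  blockDiag_signedPerm_unique_general Ab Pb Phatb hP hspark Q hQ heq
end

section
/- Let A be an n×m real matrix and let P₁ be an m×m real matrix decomposed as P₁ = P_⊥ + P_N, where every column of P_N lies in the null space N(A) of A and every column of P_⊥ lies in the orthogonal complement N(A)^⊥ (with respect to the standard inner product on ℝ^m). Define P₂ = P_⊥ − P_N. Then A P₂ = A P₁ and P₂ᵀ P₂ = P₁ᵀ P₁; in particular, P₂ is invertible if and only if P₁ is invertible. -/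
/-! The columns of `P_⊥` are orthogonal to those of `P_N`, i.e. `P_⊥ᵀ P_N = 0`, so the cross
terms of `(P_⊥ ± P_N)ᵀ (P_⊥ ± P_N)` vanish for either sign, and `A P_N = 0`. Equal Gram matrices
give `det P₂ ^ 2 = det P₁ ^ 2`, hence simultaneous invertibility. -/

open Matrix

namespace Matrix

variable {R : Type*} [CommRing R] {l m n : Type*} [Fintype m]

theorem mul_eq_zero_of_forall_mulVec_col_eq_zero {A : Matrix l m R} {N : Matrix m n R}
    (h : ∀ j, A *ᵥ (fun i => N i j) = 0) : A * N = 0 := by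
  ext i j
  exact congrFun (h j) i

theorem transpose_mul_self_sub_eq_of_transpose_mul_eq_zero {P N : Matrix m n R}
    (h : Pᵀ * N = 0) : (P - N)ᵀ * (P - N) = (P + N)ᵀ * (P + N) := by
  have h' : Nᵀ * P = 0 := by
    simpa only [transpose_mul, transpose_transpose, transpose_zero] using congrArg transpose h
  simp only [transpose_sub, transpose_add, Matrix.sub_mul, Matrix.add_mul, Matrix.mul_sub,
    Matrix.mul_add, h, h']
  abel

variable [DecidableEq m]

theorem isUnit_iff_of_transpose_mul_self_eq {P Q : Matrix m m R} (h : Qᵀ * Q = Pᵀ * P) :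
    IsUnit Q ↔ IsUnit P := by
  have hdet : Q.det * Q.det = P.det * P.det := by
    simpa only [det_mul, det_transpose] using congrArg det h
  rw [isUnit_iff_isUnit_det, isUnit_iff_isUnit_det, ← isUnit_mul_self_iff, hdet,
    isUnit_mul_self_iff]

end Matrix

/-- If `P₁ = P_⊥ + P_N` where the columns of `P_N` lie in the null space of `A` and
the columns of `P_⊥` lie in its orthogonal complement, then `P₂ = P_⊥ − P_N`
satisfies `A P₂ = A P₁` and `P₂ᵀ P₂ = P₁ᵀ P₁`; in particular `P₂` is invertible iff
`P₁` is invertible. -/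
theorem flip_nullspace_part {n m : ℕ}
    (A : Matrix (Fin n) (Fin m) ℝ)
    (P₁ Pperp PN : Matrix (Fin m) (Fin m) ℝ)
    (hdecomp : P₁ = Pperp + PN)
    (hN : ∀ j : Fin m, A.mulVec (fun i => PN i j) = 0)
    (hperp : ∀ j : Fin m, ∀ v : Fin m → ℝ, A.mulVec v = 0 → ∑ i, Pperp i j * v i = 0) :
    A * (Pperp - PN) = A * P₁ ∧
    (Pperp - PN)ᵀ * (Pperp - PN) = P₁ᵀ * P₁ ∧
    (IsUnit (Pperp - PN) ↔ IsUnit P₁) := by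
  have hAN : A * PN = 0 := mul_eq_zero_of_forall_mulVec_col_eq_zero hN
  have horth : Pperpᵀ * PN = 0 := by
    ext j k
    exact hperp j _ (hN k)
  have hgram := transpose_mul_self_sub_eq_of_transpose_mul_eq_zero horth
  subst hdecomp
  exact ⟨by rw [Matrix.mul_sub, Matrix.mul_add, hAN, sub_zero, add_zero], hgram,
    isUnit_iff_of_transpose_mul_self_eq hgram⟩
end

section
/- Let n be even, m = nL, and let A ∈ ℝ^{n×nL} be a union of L orthogonal bases which is not inter-block diagonal. Let P ∈ ℝ^{m×m} be orthogonal 2L-block diagonal with σ(AP) = n+1. Then the set of m×m permutation matrices Q_D for which there exists an orthogonal 2L-block diagonal matrix P̂ with A P Q_D = A P̂ has exactly ((m/(2L))!)^{2L} elements. -/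
/-!
Right multiplication by the permutation matrix of `σ` moves column `σ⁻¹ q` of `AP` to
position `q`. Column `q` of `A P̂` lies in the span of the columns of `A` in the block of `q`,
which, `P` being orthogonal, is the span of the `r = n/2` columns of `AP` in that block. Since
`σ(AP) = n + 1 > r + 1`, any `r + 1` columns of `AP` are independent, so `A P Q_σ = A P̂` forces
`σ` to preserve each of the `2L` blocks. Conversely, for a block-preserving `σ`, permuting the
columns of the blocks of `P` accordingly gives `P̂`. There are `(r!)^{2L}` block-preserving
permutations.
-/

open Matrix

/-- A permutation matrix: a 0–1 matrix with exactly one entry equal to `1` in each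
row and each column. -/
def IsPermMatrix {ι : Type*} [Fintype ι] (Q : Matrix ι ι ℝ) : Prop :=
  (∀ i j, Q i j = 0 ∨ Q i j = 1) ∧
  (∀ i, ∃! j, Q i j = 1) ∧ (∀ j, ∃! i, Q i j = 1)

open Equiv Function

namespace Matrix

variable {α β : Type*} [Fintype α] [Fintype β]

theorem linearIndepOn_transpose_of_card_lt_spark {D : Matrix α β ℝ} {s : Finset β}
    (hs : s.card < D.spark) : LinearIndepOn ℝ Dᵀ (s : Set β) := by
  by_contra hdep
  unfold spark at hs
  split_ifs at hs with h
  · exact hs.not_ge (Nat.sInf_le ⟨s, rfl, hdep⟩)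
  · exact h ⟨s, hdep⟩

theorem mem_of_transpose_mem_span_of_card_lt_spark {D : Matrix α β ℝ} {s : Finset β} {j : β}
    (hs : s.card + 1 < D.spark) (hj : Dᵀ j ∈ Submodule.span ℝ (Dᵀ '' s)) : j ∈ s := by
  classical
  have hind := linearIndepOn_transpose_of_card_lt_spark (s := insert j s)
    ((Finset.card_insert_le j s).trans_lt hs)
  rw [Finset.coe_insert] at hind
  exact_mod_cast linearIndepOn_insert_iff.mp hind |>.2 hj

theorem transpose_mul_self_submatrix_id {m n k R : Type*} [Fintype m] [Fintype n]
    [DecidableEq n] [DecidableEq k] [CommSemiring R] {P : Matrix m n R} (hP : Pᵀ * P = 1)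
    {f : k → n} (hf : Injective f) : (P.submatrix id f)ᵀ * P.submatrix id f = 1 := by
  rw [transpose_submatrix, ← submatrix_mul _ _ _ _ _ bijective_id, hP, submatrix_one _ hf]

theorem isPermMatrix_iff {ι : Type*} [Fintype ι] [DecidableEq ι] {Q : Matrix ι ι ℝ} :
    IsPermMatrix Q ↔ ∃ σ : Perm ι, σ.permMatrix ℝ = Q := by
  have hentry (σ : Perm ι) (i j : ι) : σ.permMatrix ℝ i j = if σ i = j then 1 else 0 := by
    simp [PEquiv.toMatrix_apply]
  constructor
  · rintro ⟨h01, hrow, hcol⟩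
    choose f hf hf' using hrow
    have hf_inj : Injective f := fun i i' he => (hcol (f i)).unique (hf i) (he ▸ hf i')
    refine ⟨Equiv.ofBijective f (Finite.injective_iff_bijective.mp hf_inj), ?_⟩
    ext i j
    rw [hentry, ofBijective_apply]
    split_ifs with hj
    · exact hj ▸ (hf i).symm
    · exact ((h01 i j).resolve_right fun h1 => hj (hf' i j h1).symm).symm
  · rintro ⟨σ, rfl⟩
    simp only [IsPermMatrix, hentry]
    refine ⟨fun i j => by split_ifs <;> simp,
      fun i => ⟨σ i, by simp, fun j => by simpa using Eq.symm⟩,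
      fun j => ⟨σ.symm j, by simp, fun i => by simp [eq_symm_apply]⟩⟩

end Matrix

theorem Equiv.Perm.permMatrix_injective {ι : Type*} [DecidableEq ι] :
    Injective fun σ : Perm ι => σ.permMatrix ℝ := by
  intro σ τ h
  ext i
  have := congrFun (congrFun h i) (σ i)
  simpa [eq_comm] using this

section BlockDiagonal

variable {r L : ℕ}

def blockIdx (p : Fin L × Fin 2 × Fin r) : Fin L × Fin 2 := (p.1, p.2.1)

theorem mul_blockDiagonal2L_apply {m : Type*} (N : Matrix m (Fin L × Fin 2 × Fin r) ℝ)
    (X : Fin L × Fin 2 → Matrix (Fin r) (Fin r) ℝ) (i : m) (l : Fin L) (c : Fin 2) (k : Fin r) :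
    (N * blockDiagonal2L X) i (l, c, k) = ∑ t, N i (l, c, t) * X (l, c) t k := by
  rw [mul_apply, Fintype.sum_prod_type, Fintype.sum_eq_single l, Fintype.sum_prod_type,
    Fintype.sum_eq_single c]
  · simp [blockDiagonal2L]
  · intro c' hc'
    simp [blockDiagonal2L, hc']
  · intro l' hl'
    simp [blockDiagonal2L, hl']

theorem blockDiagonal2L_mul (X Y : Fin L × Fin 2 → Matrix (Fin r) (Fin r) ℝ) :
    blockDiagonal2L X * blockDiagonal2L Y = blockDiagonal2L fun b => X b * Y b := by
  ext p ⟨l, c, k⟩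
  rw [mul_blockDiagonal2L_apply]
  by_cases hp : p.1 = l ∧ p.2.1 = c
  · simp [blockDiagonal2L, hp, mul_apply]
  · simp [blockDiagonal2L, hp]

theorem transpose_mul_blockDiagonal2L_mem_span {m : Type*}
    (N : Matrix m (Fin L × Fin 2 × Fin r) ℝ) (X : Fin L × Fin 2 → Matrix (Fin r) (Fin r) ℝ)
    (l : Fin L) (c : Fin 2) (k : Fin r) :
    (N * blockDiagonal2L X)ᵀ (l, c, k) ∈ Submodule.span ℝ (Set.range fun t => Nᵀ (l, c, t)) := by
  rw [Submodule.mem_span_range_iff_exists_fun]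
  refine ⟨fun t => X (l, c) t k, ?_⟩
  ext i
  simp [mul_blockDiagonal2L_apply, mul_comm]

theorem blockIdx_comp_eq_of_mul_permMatrix_eq {m : Type*} [Fintype m]
    {A : Matrix m (Fin L × Fin 2 × Fin r) ℝ} {Pb Phat : Fin L × Fin 2 → Matrix (Fin r) (Fin r) ℝ}
    (hP : ∀ b, Pb b * (Pb b)ᵀ = 1) (hspark : 2 * r < (A * blockDiagonal2L Pb).spark)
    {σ : Perm (Fin L × Fin 2 × Fin r)}
    (h : A * blockDiagonal2L Pb * σ.permMatrix ℝ = A * blockDiagonal2L Phat) :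
    blockIdx ∘ σ = blockIdx := by
  set M := A * blockDiagonal2L Pb
  have hPhat : A * blockDiagonal2L Phat = M * blockDiagonal2L fun b => (Pb b)ᵀ * Phat b := by
    simp_rw [M, Matrix.mul_assoc, blockDiagonal2L_mul, ← Matrix.mul_assoc, hP, Matrix.one_mul]
  have hcol (q : Fin L × Fin 2 × Fin r) : Mᵀ (σ.symm q) = (M * σ.permMatrix ℝ)ᵀ q := by
    rw [PEquiv.mul_toMatrix_toPEquiv]
    rfl
  suffices ∀ q, blockIdx (σ.symm q) = blockIdx q from
    funext fun p => by simpa using (this (σ p)).symm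
  rintro ⟨l, c, k⟩
  set block := Finset.univ.image fun t : Fin r => (l, c, t)
  have hblock : Mᵀ '' block = Set.range fun t => Mᵀ (l, c, t) := by
    rw [Finset.coe_image, Finset.coe_univ, Set.image_univ]
    exact (Set.range_comp _ _).symm
  have hmem : Mᵀ (σ.symm (l, c, k)) ∈ Submodule.span ℝ (Mᵀ '' block) := by
    rw [hcol, h, hPhat, hblock]
    exact transpose_mul_blockDiagonal2L_mem_span M _ l c k
  have hcard : block.card + 1 < M.spark := by
    have : block.card ≤ r := Finset.card_image_le.trans_eq (Finset.card_fin r)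
    have := k.pos
    omega
  obtain ⟨t, -, ht⟩ :=
    Finset.mem_image.mp (mem_of_transpose_mem_span_of_card_lt_spark hcard hmem)
  rw [← ht]
  rfl

theorem exists_blockDiagonal2L_eq_mul_permMatrix {Pb : Fin L × Fin 2 → Matrix (Fin r) (Fin r) ℝ}
    (hP : ∀ b, (Pb b)ᵀ * Pb b = 1) {σ : Perm (Fin L × Fin 2 × Fin r)}
    (hσ : blockIdx ∘ σ = blockIdx) :
    ∃ Phat : Fin L × Fin 2 → Matrix (Fin r) (Fin r) ℝ, (∀ b, (Phat b)ᵀ * Phat b = 1) ∧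
      blockDiagonal2L Pb * σ.permMatrix ℝ = blockDiagonal2L Phat := by
  have hσ_symm (q : Fin L × Fin 2 × Fin r) : blockIdx (σ.symm q) = blockIdx q := by
    simpa using (congrFun hσ (σ.symm q)).symm
  set τ : Fin L × Fin 2 → Fin r → Fin r := fun b k => (σ.symm (b.1, b.2, k)).2.2
  have hτ (l : Fin L) (c : Fin 2) (k : Fin r) : σ.symm (l, c, k) = (l, c, τ (l, c) k) := by
    have := hσ_symm (l, c, k)
    simp only [blockIdx, Prod.mk.injEq] at this
    exact Prod.ext this.1 (Prod.ext this.2 rfl)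
  have hτ_inj : ∀ b, Injective (τ b) := by
    rintro ⟨l, c⟩ k k' he
    have := σ.symm.injective ((hτ l c k).trans (he ▸ (hτ l c k').symm))
    simpa using this
  refine ⟨fun b => (Pb b).submatrix id (τ b),
    fun b => transpose_mul_self_submatrix_id (hP b) (hτ_inj b), ?_⟩
  ext p ⟨l, c, k⟩
  rw [PEquiv.mul_toMatrix_toPEquiv, submatrix_apply, id, hτ]
  simp +contextual [blockDiagonal2L]

theorem ncard_blockIdx_stabilizer :
    {σ : Perm (Fin L × Fin 2 × Fin r) | blockIdx ∘ σ = blockIdx}.ncard =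
      r.factorial ^ (2 * L) := by
  have hfiber (b : Fin L × Fin 2) : {p : Fin L × Fin 2 × Fin r | blockIdx p = b}.ncard = r := by
    have : {p : Fin L × Fin 2 × Fin r | blockIdx p = b} = Set.range fun t => (b.1, b.2, t) := by
      ext ⟨l, c, t⟩
      simp [blockIdx, Prod.ext_iff, eq_comm]
    rw [this, Set.ncard_range_of_injective fun t t' h => by simpa using h,
      Nat.card_eq_fintype_card, Fintype.card_fin]
  simp [DomMulAct.stabilizer_ncard, hfiber, mul_comm]

end BlockDiagonal

theorem card_block_preserving_permutations_general {r L : ℕ}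
    (Ab : Fin L → Matrix (Fin (2 * r)) (Fin 2 × Fin r) ℝ)
    (Pb : Fin L × Fin 2 → Matrix (Fin r) (Fin r) ℝ)
    (hP : ∀ b, (Pb b)ᵀ * Pb b = 1)
    (hspark : (unionOfBases Ab * blockDiagonal2L Pb).spark = 2 * r + 1) :
    {QD : Matrix (Fin L × Fin 2 × Fin r) (Fin L × Fin 2 × Fin r) ℝ |
        IsPermMatrix QD ∧
        ∃ Phatb : Fin L × Fin 2 → Matrix (Fin r) (Fin r) ℝ,
          (∀ b, (Phatb b)ᵀ * Phatb b = 1) ∧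
          unionOfBases Ab * blockDiagonal2L Pb * QD
            = unionOfBases Ab * blockDiagonal2L Phatb}.ncard
      = (Nat.factorial r) ^ (2 * L) := by
  rw [← ncard_blockIdx_stabilizer, ← Set.ncard_image_of_injective _ Perm.permMatrix_injective]
  congr 1
  ext QD
  simp only [Set.mem_ofPred_eq, Set.mem_image, isPermMatrix_iff]
  constructor
  · rintro ⟨⟨σ, rfl⟩, Phat, -, h⟩
    exact ⟨σ, blockIdx_comp_eq_of_mul_permMatrix_eq (fun b => mul_eq_one_comm.mp (hP b))
      (by omega) h, rfl⟩
  · rintro ⟨σ, hσ, rfl⟩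
    obtain ⟨Phat, hPhat, h⟩ := exists_blockDiagonal2L_eq_mul_permMatrix hP hσ
    exact ⟨⟨σ, rfl⟩, Phat, hPhat, by rw [Matrix.mul_assoc, h]⟩

/-- If `A ∈ ℝ^{n × nL}` is a union of `L` orthogonal bases which is not inter-block
diagonal and `P` is orthogonal `2L`-block diagonal with `σ(AP) = n + 1`, then the
number of `m × m` permutation matrices `Q_D` (with `m = nL`) for which there exists
an orthogonal `2L`-block diagonal `P̂` with `A P Q_D = A P̂` is exactly
`((m / (2L))!)^{2L} = (r!)^{2L}`. -/
theorem card_block_preserving_permutations {r L : ℕ}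
    (Ab : Fin L → Matrix (Fin (2 * r)) (Fin 2 × Fin r) ℝ)
    (hA : ∀ l, (Ab l)ᵀ * Ab l = 1)
    (hnibd : ¬ IsInterBlockDiagonal Ab)
    (Pb : Fin L × Fin 2 → Matrix (Fin r) (Fin r) ℝ)
    (hP : ∀ b, (Pb b)ᵀ * Pb b = 1)
    (hspark : (unionOfBases Ab * blockDiagonal2L Pb).spark = 2 * r + 1) :
    {QD : Matrix (Fin L × Fin 2 × Fin r) (Fin L × Fin 2 × Fin r) ℝ |
        IsPermMatrix QD ∧
        ∃ Phatb : Fin L × Fin 2 → Matrix (Fin r) (Fin r) ℝ,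
          (∀ b, (Phatb b)ᵀ * Phatb b = 1) ∧
          unionOfBases Ab * blockDiagonal2L Pb * QD
            = unionOfBases Ab * blockDiagonal2L Phatb}.ncard
      = (Nat.factorial r) ^ (2 * L) :=
  card_block_preserving_permutations_general Ab Pb hP hspark
end

section
/- Let Σ be an n×n real diagonal matrix with nonnegative diagonal entries and let Z be an n×n real orthogonal matrix. Then Tr(ΣZ) ≤ Tr(Σ). Moreover, if all diagonal entries of Σ are strictly positive, then Tr(ΣZ) = Tr(Σ) if and only if Z is the identity matrix. (This is the key step showing that in the basis update step of the OBD-BCS algorithm, when R = S Bᵀ A has full rank with singular value decomposition R = U Σ Vᵀ, the matrix P = V Uᵀ is the unique orthogonal maximizer of Tr[Bᵀ A P S].) -/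
open Matrix

/-! Since `Σ` is diagonal, `Tr(ΣZ) = ∑ᵢ σᵢ Zᵢᵢ`. Every column of an orthogonal `Z` is a unit
vector, so `Zᵢᵢ ≤ 1` and the sum is at most `∑ᵢ σᵢ = Tr Σ`. When all `σᵢ > 0`, equality forces
`Zᵢᵢ = 1` for every `i`, and then the unit length of column `i` kills its off-diagonal entries. -/

namespace Matrix

variable {ι R : Type*} [Fintype ι]

theorem IsDiag.trace_mul [NonUnitalNonAssocSemiring R] {S : Matrix ι ι R} (hS : S.IsDiag)
    (M : Matrix ι ι R) : (S * M).trace = ∑ i, S i i * M i i := by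
  classical
  conv_lhs => rw [← hS.diagonal_diag]
  simp only [trace, diag_apply, diagonal_mul]

theorem sum_sq_col_eq_one_of_transpose_mul_self [Semiring R] [DecidableEq ι] {Z : Matrix ι ι R}
    (hZ : Zᵀ * Z = 1) (j : ι) : ∑ k, Z k j ^ 2 = 1 := by
  simpa [mul_apply, sq] using congr_fun₂ hZ j j

section Orthogonal

variable [CommRing R] [LinearOrder R] [IsStrictOrderedRing R] {Z : Matrix ι ι R}

theorem entry_le_one_of_transpose_mul_self [DecidableEq ι] (hZ : Zᵀ * Z = 1) (i j : ι) :
    Z i j ≤ 1 := by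
  have hsq : Z i j ^ 2 ≤ 1 := by
    rw [← sum_sq_col_eq_one_of_transpose_mul_self hZ j]
    exact Finset.single_le_sum (fun k _ ↦ sq_nonneg (Z k j)) (Finset.mem_univ i)
  exact (abs_le.mp (sq_le_one_iff_abs_le_one _ |>.mp hsq)).2

theorem eq_one_of_transpose_mul_self_of_diag_eq_one [DecidableEq ι] (hZ : Zᵀ * Z = 1)
    (hd : ∀ i, Z i i = 1) : Z = 1 := by
  ext i j
  obtain rfl | hij := eq_or_ne i j
  · simp [hd]
  have hrest : ∑ k ∈ Finset.univ.erase j, Z k j ^ 2 = 0 := by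
    have hcol := sum_sq_col_eq_one_of_transpose_mul_self hZ j
    rw [← Finset.add_sum_erase _ _ (Finset.mem_univ j), hd j] at hcol
    linarith
  have hsq : Z i j ^ 2 = 0 :=
    (Finset.sum_eq_zero_iff_of_nonneg (fun k _ ↦ sq_nonneg (Z k j))).mp hrest i
      (Finset.mem_erase.mpr ⟨hij, Finset.mem_univ i⟩)
  simp [pow_eq_zero_iff two_ne_zero |>.mp hsq, one_apply_ne hij]

end Orthogonal

end Matrix

/-- For a diagonal matrix `Σ` with nonnegative diagonal entries and an orthogonal
matrix `Z`, `Tr(ΣZ) ≤ Tr(Σ)`; and when all diagonal entries are strictly positive,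
equality holds iff `Z` is the identity. -/
theorem trace_diag_mul_orthogonal_le {n : ℕ}
    (S Z : Matrix (Fin n) (Fin n) ℝ)
    (hdiag : ∀ i j : Fin n, i ≠ j → S i j = 0)
    (hnonneg : ∀ i, 0 ≤ S i i)
    (hZ : Zᵀ * Z = 1) :
    (S * Z).trace ≤ S.trace ∧
    ((∀ i, 0 < S i i) → ((S * Z).trace = S.trace ↔ Z = 1)) := by
  have htr : (S * Z).trace = ∑ i, S i i * Z i i :=
    IsDiag.trace_mul (fun i j hij ↦ hdiag i j hij) Z
  have hterm : ∀ i ∈ Finset.univ, S i i * Z i i ≤ S i i := fun i _ ↦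
    mul_le_of_le_one_right (hnonneg i) (entry_le_one_of_transpose_mul_self hZ i i)
  refine ⟨htr ▸ Finset.sum_le_sum hterm, fun hpos ↦ ⟨fun heq ↦ ?_, ?_⟩⟩
  · refine eq_one_of_transpose_mul_self_of_diag_eq_one hZ fun i ↦ ?_
    have hi := (Finset.sum_eq_sum_iff_of_le hterm).mp (htr ▸ heq) i (Finset.mem_univ i)
    exact (mul_eq_left₀ (hpos i).ne').mp hi
  · rintro rfl
    simp
end
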